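/- arXiv:1804.00020 — 4 statements merged into one kernel-verified Lean document; each statement's English description precedes it below -/
import Mathlib

section
/- For each integer n ≥ 2, one has (1 − n(n−1)/2)·B_n/n! = Σ_{i=2}^{n−2} (i−1)·(B_i/i!)·(B_{n−i}/(n−i)!), where the sum is over integers i with 2 ≤ i ≤ n−2 (and is empty for n = 2, 3). -/
/-!
Write `B = x/(eˣ - 1)`. Differentiating `B·(eˣ - 1) = x` gives the Riccati equation
`B² = B - xB - xB'`. The tail `T = B - 1 + x/2` keeps the coefficients `Bᵢ/i!` for `i ≥ 2`,
and satisfies `T² = x²/4 - T - xT'`, so `[xⁿ]T² = -(n+1)Bₙ/n!` for `n > 2`. The sum in the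
theorem is `[xⁿ]((xT' - T)·T)`. Because `2(xT' - T)T = x(T²)' - 2T²`, it equals
`(n/2 - 1)·[xⁿ]T²`.
-/

open PowerSeries Finset Nat

namespace PowerSeries

variable {R : Type*} [CommRing R]

theorem coeff_X_mul_derivative (f : R⟦X⟧) (n : ℕ) :
    coeff n (X * d⁄dX R f) = n * coeff n f := by
  cases n with
  | zero => simp
  | succ n => rw [coeff_succ_X_mul, coeff_derivative, mul_comm]; push_cast; rfl

theorem two_mul_coeff_X_mul_derivative_sub_mul (f : R⟦X⟧) (n : ℕ) :
    2 * coeff n ((X * d⁄dX R f - f) * f) = ((n : R) - 2) * coeff n (f ^ 2) := by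
  have h : (X * d⁄dX R f - f) * f + (X * d⁄dX R f - f) * f =
      X * d⁄dX R (f ^ 2) - C 2 * f ^ 2 := by
    rw [derivative_pow, map_ofNat]; ring
  rw [two_mul, ← map_add, h, map_sub, coeff_X_mul_derivative, coeff_C_mul]
  ring

end PowerSeries

theorem bernoulliPowerSeries_sq (A : Type*) [CommRing A] [Algebra ℚ A] :
    bernoulliPowerSeries A ^ 2 =
      bernoulliPowerSeries A - X * bernoulliPowerSeries A -
        X * d⁄dX A (bernoulliPowerSeries A) := by
  set B := bernoulliPowerSeries A
  have h₀ : B * (exp A - 1) = X := bernoulliPowerSeries_mul_exp_sub_one A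
  have h₁ := congrArg (d⁄dX A) h₀
  simp only [Derivation.leibniz, map_sub, derivative_exp, derivative_one, derivative_X,
    sub_zero, smul_eq_mul] at h₁
  linear_combination B * h₁ - d⁄dX A B * h₀ - B * h₀

def bernoulliTail : ℚ⟦X⟧ := mk fun n => if 2 ≤ n then bernoulli n / n ! else 0

theorem coeff_bernoulliTail (n : ℕ) :
    coeff n bernoulliTail = if 2 ≤ n then bernoulli n / n ! else 0 :=
  coeff_mk _ _

theorem bernoulliPowerSeries_eq_add_bernoulliTail :
    bernoulliPowerSeries ℚ = 1 - C (1 / 2 : ℚ) * X + bernoulliTail := by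
  ext (_ | _ | n) <;>
    norm_num [bernoulliPowerSeries, coeff_bernoulliTail, -coeff_zero_eq_constantCoeff,
      coeff_one, coeff_X]

theorem bernoulliTail_sq :
    bernoulliTail ^ 2 = C (1 / 4 : ℚ) * X ^ 2 - bernoulliTail - X * d⁄dX ℚ bernoulliTail := by
  have h := bernoulliPowerSeries_sq ℚ
  rw [bernoulliPowerSeries_eq_add_bernoulliTail] at h
  simp only [map_add, map_sub, Derivation.leibniz, derivative_one, derivative_C, derivative_X,
    smul_eq_mul] at h
  have hc : 2 * C (1 / 2 : ℚ) = 1 := by rw [← map_ofNat C 2, ← map_mul]; norm_num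
  have hc2 : C (1 / 2 : ℚ) ^ 2 = C (1 / 4) := by rw [← map_pow]; norm_num
  linear_combination h + (X * bernoulliTail + X - C (1 / 2 : ℚ) * X ^ 2) * hc + X ^ 2 * hc2

theorem coeff_X_mul_derivative_sub_mul_bernoulliTail (n : ℕ) :
    coeff n ((X * d⁄dX ℚ bernoulliTail - bernoulliTail) * bernoulliTail) =
      ∑ i ∈ Icc 2 (n - 2),
        ((i : ℚ) - 1) * (bernoulli i / i !) * (bernoulli (n - i) / (n - i)!) := by
  rw [coeff_mul, Nat.sum_antidiagonal_eq_sum_range_succ_mk]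
  simp only [map_sub, coeff_X_mul_derivative, coeff_bernoulliTail]
  have hsub : Icc 2 (n - 2) ⊆ range (n + 1) := fun i hi => by
    simp only [mem_Icc, mem_range] at hi ⊢
    omega
  rw [← sum_subset hsub fun i hrange hnot => ?_]
  · refine sum_congr rfl fun i hi => ?_
    rw [mem_Icc] at hi
    rw [if_pos hi.1, if_pos (by omega)]
    ring
  · simp only [mem_range, mem_Icc, not_and_or, not_le] at hrange hnot
    rcases hnot with hi | hi
    · rw [if_neg (show ¬2 ≤ i by omega), mul_zero, sub_zero, zero_mul]
    · rw [if_neg (show ¬2 ≤ n - i by omega), mul_zero]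

/-- For each integer `n ≥ 2` one has
`(1 − n(n−1)/2)·Bₙ/n! = Σ_{i=2}^{n−2} (i−1)·(Bᵢ/i!)·(B_{n−i}/(n−i)!)`,
where `Bₙ` denotes the Bernoulli numbers defined by `x/(eˣ−1) = Σ_{n≥0} Bₙ xⁿ/n!`
(Mathlib's `bernoulli`), and the sum ranges over integers `i` with `2 ≤ i ≤ n−2`
(so it is empty for `n = 2, 3`). -/
theorem bernoulli_constant_term_identity (n : ℕ) (hn : 2 ≤ n) :
    (1 - (n : ℚ) * ((n : ℚ) - 1) / 2) * bernoulli n / (n.factorial : ℚ) =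
      ∑ i ∈ Finset.Icc 2 (n - 2),
        ((i : ℚ) - 1) * (bernoulli i / (i.factorial : ℚ)) *
          (bernoulli (n - i) / ((n - i).factorial : ℚ)) := by
  have hsq := congrArg (coeff n) bernoulliTail_sq
  have hsym := two_mul_coeff_X_mul_derivative_sub_mul bernoulliTail n
  rw [coeff_X_mul_derivative_sub_mul_bernoulliTail] at hsym
  simp only [map_sub, coeff_C_mul_X_pow, coeff_X_mul_derivative, coeff_bernoulliTail,
    if_pos hn] at hsq
  rw [hsq] at hsym
  have hdeg : ((n : ℚ) - 2) * (if n = 2 then 1 / 4 else 0) = 0 := by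
    split_ifs with h <;> simp [h]
  linear_combination (-1 / 2 : ℚ) * hsym - (1 / 2 : ℚ) * hdeg
end

section
/- For every integer j ≥ 0, both f_c·∂^{(j)}g_c and g_c·∂^{(j)}g_c lie in the ℂ-linear span of {∂^{(k)}g_c : k ∈ ℤ, k ≥ 0} inside the field of formal Laurent series ℂ((z)). -/
noncomputable section

/-- The formal derivative `∂_z` of a formal Laurent series. -/
def lderiv (f : LaurentSeries ℂ) : LaurentSeries ℂ where
  coeff n := ((n + 1 : ℤ) : ℂ) * f.coeff (n + 1)
  isPWO_support' := by
    have h : (Function.support fun n : ℤ => ((n + 1 : ℤ) : ℂ) * f.coeff (n + 1))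
        ⊆ (fun n : ℤ => n - 1) '' f.support := by
      intro n hn
      refine ⟨n + 1, ?_, by ring⟩
      intro h0
      simp [HahnSeries.support] at hn
      exact hn.2 h0
    exact (f.isPWO_support.image_of_monotone
      (fun a b hab => by exact sub_le_sub_right hab 1)).mono h

/-- The substitution `z ↦ -z` on formal Laurent series, i.e. `f(z) ↦ f(-z)`:
the coefficient of `zⁿ` is multiplied by `(-1)ⁿ`. -/
def negSub (f : LaurentSeries ℂ) : LaurentSeries ℂ where
  coeff n := ((-1 : ℂ) ^ n) * f.coeff n
  isPWO_support' := by
    apply f.isPWO_support.mono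
    intro n hn h0
    exact hn (by simp [h0])

/-- The divided power derivative `∂^{(k)} = (1/k!)·∂_z^k` on formal Laurent series. -/
def dpow (k : ℕ) (f : LaurentSeries ℂ) : LaurentSeries ℂ :=
  ((k.factorial : ℂ))⁻¹ • lderiv^[k] f

/-- The formal Laurent series `f_c(z) = Σ_{n≥0} (−1)ⁿ·Bₙ·cⁿ·z^{n−1}/n!`, the Laurent
expansion at `z = 0` of `c·e^{cz}/(e^{cz}−1)`; here `Bₙ` are the Bernoulli numbers,
defined by `x/(eˣ−1) = Σ_{n≥0} Bₙ xⁿ/n!`. -/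
def fc (c : ℂ) : LaurentSeries ℂ :=
  (HahnSeries.single (-1 : ℤ) (1 : ℂ)) *
    (PowerSeries.mk fun n => (-1) ^ n * (bernoulli n : ℂ) * c ^ n / (n.factorial : ℂ) :
      PowerSeries ℂ)

/-- `g_c = ∂_z f_c`. -/
def gc (c : ℂ) : LaurentSeries ℂ := lderiv (fc c)

/-!
With `u = e^{cz}` put `b_m = u / (u - 1)^m`. Bernoulli's generating function gives `f_c = c b_1`,
and since `u' = c u` and `u = (u - 1) + 1`,
`b_m' = c (1 - m) b_m - c m b_{m+1}` and `b_{a+1} b_{b+1} = b_{a+b+1} + b_{a+b+2}`.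
Hence `g_c = -c² b_2`, the span `U` of the `b_m` with `m ≥ 2` is stable under `∂_z` and under
multiplication by `b_1` and `b_2`, so it contains every `∂^{(j)} g_c` together with its products
by `f_c` and `g_c`. Conversely, for `m ≥ 2` the derivative formula expresses `b_{m+1}` through
`b_m` and `b_m'`, so by induction `U` lies in the span of the `∂^{(k)} g_c`, which is `∂_z`-stable.
-/

open PowerSeries in
theorem PowerSeries.derivative_rescale {R : Type*} [CommRing R] (a : R) (f : PowerSeries R) :
    d⁄dX R (rescale a f) = C a * rescale a (d⁄dX R f) := by
  ext n
  simp only [coeff_derivative, coeff_rescale, coeff_C_mul]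
  ring

theorem div_sub_one_pow_mul_div_sub_one_pow {K : Type*} [Field K] (u : K) (a b : ℕ) :
    u / (u - 1) ^ (a + 1) * (u / (u - 1) ^ (b + 1)) =
      u / (u - 1) ^ (a + b + 1) + u / (u - 1) ^ (a + b + 2) := by
  by_cases hw : u - 1 = 0
  · simp [hw]
  field_simp
  ring

theorem Derivation.leibniz_div_sub_one_pow {R K M : Type*} [CommRing R] [Field K] [Algebra R K]
    [AddCommGroup M] [Module K M] [Module R M] (D : Derivation R K M) (u : K) (m : ℕ) :
    D (u / (u - 1) ^ m) = ((u - 1) ^ m)⁻¹ • D u - (m * u * ((u - 1) ^ (m + 1))⁻¹) • D u := by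
  by_cases hw : u - 1 = 0
  · obtain rfl : u = 1 := sub_eq_zero.mp hw
    rcases m with _ | m <;> simp
  have hpow : D ((u - 1) ^ m) = (m * (u - 1) ^ m * (u - 1)⁻¹) • D u := by
    rcases m with _ | m
    · simp
    · rw [D.leibniz_pow, D.map_sub, D.map_one_eq_zero, sub_zero, Nat.add_sub_cancel,
        ← Nat.cast_smul_eq_nsmul K, smul_smul]
      congr 1
      field_simp
      ring
  rw [D.leibniz_div, hpow, smul_smul, ← sub_smul, smul_smul, ← sub_smul]
  congr 1
  field_simp
  ring

theorem LinearMap.apply_mem_span_range {R M ι : Type*} [Semiring R] [AddCommMonoid M] [Module R M]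
    (T : M →ₗ[R] M) {v : ι → M} (hT : ∀ i, T (v i) ∈ Submodule.span R (Set.range v)) {x : M}
    (hx : x ∈ Submodule.span R (Set.range v)) : T x ∈ Submodule.span R (Set.range v) :=
  (Submodule.span_le (p := (Submodule.span R (Set.range v)).comap T)).mpr
    (Set.range_subset_iff.mpr hT) hx

namespace LaurentSeries

open HahnSeries

theorem coeff_lderiv (f : LaurentSeries ℂ) (n : ℤ) :
    (lderiv f).coeff n = ((n + 1 : ℤ) : ℂ) * f.coeff (n + 1) := rfl

theorem lderiv_add (f g : LaurentSeries ℂ) : lderiv (f + g) = lderiv f + lderiv g := by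
  ext n
  simp only [coeff_lderiv, coeff_add]
  ring

theorem lderiv_smul (r : ℂ) (f : LaurentSeries ℂ) : lderiv (r • f) = r • lderiv f := by
  ext n
  simp only [coeff_lderiv, HahnSeries.coeff_smul, smul_eq_mul]
  ring

theorem lderiv_single (a : ℤ) (r : ℂ) : lderiv (single a r) = single (a - 1) (a * r) := by
  ext n
  rw [coeff_lderiv, coeff_single, coeff_single]
  by_cases h : n = a - 1
  · subst h; simp
  · rw [if_neg (by omega), if_neg h, mul_zero]

theorem lderiv_one : lderiv 1 = 0 := by
  simpa using lderiv_single 0 1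

theorem lderiv_single_mul (a : ℤ) (r : ℂ) (f : LaurentSeries ℂ) :
    lderiv (single a r * f) = lderiv (single a r) * f + single a r * lderiv f := by
  ext n
  simp only [lderiv_single, coeff_add, coeff_single_mul, coeff_lderiv]
  rw [show n - (a - 1) = n + 1 - a by ring, show n - a + 1 = n + 1 - a by ring]
  push_cast
  ring

open PowerSeries in
theorem lderiv_coe (p : PowerSeries ℂ) :
    lderiv (p : LaurentSeries ℂ) = (d⁄dX ℂ p : PowerSeries ℂ) := by
  ext n
  rw [coeff_lderiv, PowerSeries.coeff_coe, PowerSeries.coeff_coe]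
  obtain ⟨k, rfl | rfl⟩ := Int.eq_nat_or_neg n
  · rw [if_neg (by omega), if_neg (by omega), PowerSeries.coeff_derivative]
    push_cast
    rw [show ((k : ℤ) + 1).natAbs = k + 1 by omega, Int.natAbs_natCast]
    ring
  · rcases k with _ | _ | k
    · simp [PowerSeries.coeff_derivative]
    · simp
    · rw [if_pos (by omega), if_pos (by omega), mul_zero]

open PowerSeries in
/-- Writing `f = z^a P` and `g = z^b Q` with power series `P, Q` reduces the Leibniz rule to that of
`d⁄dX` and to the case of a monomial factor. -/
theorem lderiv_mul (f g : LaurentSeries ℂ) : lderiv (f * g) = lderiv f * g + f * lderiv g := by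
  obtain ⟨a, P, rfl⟩ : ∃ (a : ℤ) (P : PowerSeries ℂ), f = single a 1 * (P : LaurentSeries ℂ) :=
    ⟨_, _, (single_order_mul_powerSeriesPart f).symm⟩
  obtain ⟨b, Q, rfl⟩ : ∃ (b : ℤ) (Q : PowerSeries ℂ), g = single b 1 * (Q : LaurentSeries ℂ) :=
    ⟨_, _, (single_order_mul_powerSeriesPart g).symm⟩
  rw [show single a 1 * (P : LaurentSeries ℂ) * (single b 1 * (Q : LaurentSeries ℂ)) =
      single a 1 * (single b 1 * ((P * Q : PowerSeries ℂ) : LaurentSeries ℂ)) by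
    rw [PowerSeries.coe_mul]; ring]
  simp only [lderiv_single_mul, lderiv_coe, Derivation.leibniz]
  simp only [smul_eq_mul, map_add, map_mul]
  ring

def lderivLinearMap : LaurentSeries ℂ →ₗ[ℂ] LaurentSeries ℂ where
  toFun := lderiv
  map_add' := lderiv_add
  map_smul' := lderiv_smul

def lderivDerivation : Derivation ℂ (LaurentSeries ℂ) (LaurentSeries ℂ) where
  toFun := lderiv
  map_add' := lderiv_add
  -- The `ℂ`-algebra structure of `ℂ((z))` comes from `ℂ[[z]]`: here `r • f` is `C r * f`,
  -- which is only propositionally the coefficientwise action of `lderiv_smul`.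
  map_smul' r f := by
    rw [RingHom.id_apply, ← lderiv_smul, Algebra.smul_def]
    simp [HahnSeries.algebraMap_apply']
  map_one_eq_zero' := lderiv_one
  leibniz' f g := by
    change lderiv (f * g) = f * lderiv g + g * lderiv f
    rw [lderiv_mul]
    ring

theorem lderiv_dpow (k : ℕ) (f : LaurentSeries ℂ) :
    lderiv (dpow k f) = ((k : ℂ) + 1) • dpow (k + 1) f := by
  rw [dpow, dpow, lderiv_smul, smul_smul, ← Function.iterate_succ_apply' lderiv, Nat.factorial_succ]
  congr 1
  push_cast
  field_simp

theorem lderiv_mem_span_dpow {f x : LaurentSeries ℂ}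
    (hx : x ∈ Submodule.span ℂ (Set.range fun k : ℕ => dpow k f)) :
    lderiv x ∈ Submodule.span ℂ (Set.range fun k : ℕ => dpow k f) :=
  lderivLinearMap.apply_mem_span_range (fun k => by
    change lderiv _ ∈ _
    rw [lderiv_dpow]
    exact Submodule.smul_mem _ _ (Submodule.subset_span ⟨k + 1, rfl⟩)) hx

/- There is no `IsScalarTower ℂ ℂ((z)) ℂ((z))` for the coefficientwise action, so constant factors
are written as `HahnSeries.C r` and turned into scalars only when meeting a submodule. -/
theorem C_mul_mem {p : Submodule ℂ (LaurentSeries ℂ)} (r : ℂ) {x : LaurentSeries ℂ} (hx : x ∈ p) :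
    HahnSeries.C r * x ∈ p := by
  rw [HahnSeries.C_mul_eq_smul]
  exact p.smul_mem r hx

theorem mem_of_C_mul_mem {p : Submodule ℂ (LaurentSeries ℂ)} {r : ℂ} (hr : r ≠ 0)
    {x : LaurentSeries ℂ} (hx : HahnSeries.C r * x ∈ p) : x ∈ p := by
  rw [HahnSeries.C_mul_eq_smul] at hx
  exact (p.smul_mem_iff hr).mp hx

end LaurentSeries

open LaurentSeries

def expLaurent (c : ℂ) : LaurentSeries ℂ :=
  (PowerSeries.rescale c (PowerSeries.exp ℂ) : PowerSeries ℂ)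

def expFrac (c : ℂ) (m : ℕ) : LaurentSeries ℂ := expLaurent c / (expLaurent c - 1) ^ m

theorem lderiv_expLaurent (c : ℂ) : lderiv (expLaurent c) = HahnSeries.C c * expLaurent c := by
  rw [expLaurent, lderiv_coe, PowerSeries.derivative_rescale, PowerSeries.derivative_exp,
    PowerSeries.coe_mul, PowerSeries.coe_C]

theorem expLaurent_sub_one_ne_zero {c : ℂ} (hc : c ≠ 0) : expLaurent c - 1 ≠ 0 := by
  intro h
  have h1 := congrArg (fun f : LaurentSeries ℂ => f.coeff ((1 : ℕ) : ℤ)) h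
  simp only [expLaurent, HahnSeries.coeff_sub, coeff_coe_powerSeries, PowerSeries.coeff_rescale,
    PowerSeries.coeff_exp] at h1
  simp [hc] at h1

open PowerSeries in
theorem fc_mul_expLaurent_sub_one (c : ℂ) :
    fc c * (expLaurent c - 1) = HahnSeries.C c * expLaurent c := by
  have hB : (PowerSeries.mk fun n => (-1) ^ n * (bernoulli n : ℂ) * c ^ n / (n.factorial : ℂ)) =
      rescale c (bernoulli'PowerSeries ℂ) := by
    ext n
    rw [coeff_mk, coeff_rescale, bernoulli'PowerSeries, coeff_mk, bernoulli,
      eq_ratCast (algebraMap ℚ ℂ)]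
    push_cast
    rw [← mul_assoc, ← mul_pow]
    norm_num
    ring
  have hgen := congrArg (rescale c) (bernoulli'PowerSeries_mul_exp_sub_one ℂ)
  rw [map_mul, map_sub, map_one, map_mul, rescale_X] at hgen
  rw [fc, hB, expLaurent, mul_assoc, ← coe_one, ← coe_sub, ← coe_mul, hgen, coe_mul, coe_mul,
    coe_C, coe_X]
  have hz : HahnSeries.single (-1 : ℤ) (1 : ℂ) * HahnSeries.single 1 1 = 1 := by
    simp [HahnSeries.single_mul_single]
  linear_combination (HahnSeries.C c * HahnSeries.ofPowerSeries ℤ ℂ (rescale c (exp ℂ))) * hz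

theorem fc_eq_C_mul_expFrac {c : ℂ} (hc : c ≠ 0) : fc c = HahnSeries.C c * expFrac c 1 := by
  rw [expFrac, pow_one, mul_div_assoc', eq_div_iff (expLaurent_sub_one_ne_zero hc),
    fc_mul_expLaurent_sub_one]

theorem lderiv_expFrac {c : ℂ} (hc : c ≠ 0) (m : ℕ) :
    lderiv (expFrac c m) =
      HahnSeries.C (c * (1 - m)) * expFrac c m - HahnSeries.C (c * m) * expFrac c (m + 1) := by
  have hw := expLaurent_sub_one_ne_zero hc
  have h := lderivDerivation.leibniz_div_sub_one_pow (expLaurent c) m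
  change lderiv _ = _ • lderiv _ - _ • lderiv _ at h
  rw [expFrac, expFrac, h, smul_eq_mul, smul_eq_mul, lderiv_expLaurent]
  simp only [map_mul, map_sub, map_one, map_natCast]
  field_simp
  ring

theorem gc_eq_C_mul_expFrac {c : ℂ} (hc : c ≠ 0) : gc c = HahnSeries.C (-c ^ 2) * expFrac c 2 := by
  rw [gc, fc_eq_C_mul_expFrac hc, HahnSeries.C_mul_eq_smul, lderiv_smul, lderiv_expFrac hc,
    ← HahnSeries.C_mul_eq_smul]
  simp [smul_smul, sq]

theorem expFrac_mul_expFrac (c : ℂ) (a b : ℕ) :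
    expFrac c (a + 1) * expFrac c (b + 1) = expFrac c (a + b + 1) + expFrac c (a + b + 2) :=
  div_sub_one_pow_mul_div_sub_one_pow _ a b

def expFracSpan (c : ℂ) : Submodule ℂ (LaurentSeries ℂ) :=
  Submodule.span ℂ (Set.range fun k : ℕ => expFrac c (k + 2))

theorem expFrac_mem_expFracSpan (c : ℂ) (k : ℕ) : expFrac c (k + 2) ∈ expFracSpan c :=
  Submodule.subset_span ⟨k, rfl⟩

theorem lderiv_mem_expFracSpan {c : ℂ} (hc : c ≠ 0) {x : LaurentSeries ℂ}
    (hx : x ∈ expFracSpan c) : lderiv x ∈ expFracSpan c := by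
  refine lderivLinearMap.apply_mem_span_range (fun k => ?_) hx
  change lderiv _ ∈ expFracSpan c
  rw [lderiv_expFrac hc]
  exact sub_mem (C_mul_mem _ (expFrac_mem_expFracSpan c k))
    (C_mul_mem _ (expFrac_mem_expFracSpan c (k + 1)))

theorem expFrac_mul_mem_expFracSpan (c : ℂ) (n : ℕ) {x : LaurentSeries ℂ}
    (hx : x ∈ expFracSpan c) : expFrac c (n + 1) * x ∈ expFracSpan c := by
  induction hx using Submodule.span_induction with
  | mem y hy =>
    obtain ⟨k, rfl⟩ := hy
    rw [expFrac_mul_expFrac c n (k + 1)]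
    exact add_mem (expFrac_mem_expFracSpan c (n + k)) (expFrac_mem_expFracSpan c (n + k + 1))
  | zero => simp
  | add y z _ _ hy hz => rw [mul_add]; exact add_mem hy hz
  | smul r y _ hy =>
    rw [← HahnSeries.C_mul_eq_smul, mul_left_comm]
    exact C_mul_mem r hy

theorem fc_mul_mem_expFracSpan {c : ℂ} (hc : c ≠ 0) {x : LaurentSeries ℂ}
    (hx : x ∈ expFracSpan c) : fc c * x ∈ expFracSpan c := by
  rw [fc_eq_C_mul_expFrac hc, mul_assoc]
  exact C_mul_mem _ (expFrac_mul_mem_expFracSpan c 0 hx)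

theorem gc_mul_mem_expFracSpan {c : ℂ} (hc : c ≠ 0) {x : LaurentSeries ℂ}
    (hx : x ∈ expFracSpan c) : gc c * x ∈ expFracSpan c := by
  rw [gc_eq_C_mul_expFrac hc, mul_assoc]
  exact C_mul_mem _ (expFrac_mul_mem_expFracSpan c 1 hx)

theorem dpow_gc_mem_expFracSpan {c : ℂ} (hc : c ≠ 0) (j : ℕ) : dpow j (gc c) ∈ expFracSpan c := by
  have hgc : gc c ∈ expFracSpan c := by
    rw [gc_eq_C_mul_expFrac hc]
    exact C_mul_mem _ (expFrac_mem_expFracSpan c 0)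
  have hiter : lderiv^[j] (gc c) ∈ expFracSpan c := by
    induction j with
    | zero => exact hgc
    | succ j ih => rw [Function.iterate_succ_apply']; exact lderiv_mem_expFracSpan hc ih
  exact (expFracSpan c).smul_mem _ hiter

theorem expFracSpan_le_span_dpow_gc {c : ℂ} (hc : c ≠ 0) :
    expFracSpan c ≤ Submodule.span ℂ (Set.range fun k : ℕ => dpow k (gc c)) := by
  refine Submodule.span_le.mpr (Set.range_subset_iff.mpr fun k => ?_)
  induction k with
  | zero =>
    have hgc : HahnSeries.C (-c ^ 2) * expFrac c 2 ∈
        Submodule.span ℂ (Set.range fun k : ℕ => dpow k (gc c)) := by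
      rw [← gc_eq_C_mul_expFrac hc]
      exact Submodule.subset_span ⟨0, by simp [dpow]⟩
    exact mem_of_C_mul_mem (by simpa using hc) hgc
  | succ k ih =>
    have h := lderiv_expFrac hc (k + 2)
    rw [eq_sub_iff_add_eq', ← eq_sub_iff_add_eq] at h
    refine mem_of_C_mul_mem (r := c * (k + 2 : ℕ)) (mul_ne_zero hc (by norm_cast)) ?_
    rw [show k + 1 + 2 = k + 2 + 1 from rfl, h]
    exact sub_mem (C_mul_mem _ ih) (lderiv_mem_span_dpow ih)

/-- For `c ≠ 0` and every `j ≥ 0`, both `f_c·∂^{(j)}g_c` and `g_c·∂^{(j)}g_c` lie in the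
ℂ-linear span of `{∂^{(k)}g_c : k ≥ 0}` inside `ℂ((z))`. -/
theorem fc_gc_span_closure (c : ℂ) (hc : c ≠ 0) (j : ℕ) :
    fc c * dpow j (gc c) ∈ Submodule.span ℂ (Set.range fun k : ℕ => dpow k (gc c)) ∧
    gc c * dpow j (gc c) ∈ Submodule.span ℂ (Set.range fun k : ℕ => dpow k (gc c)) := by
  have hj := dpow_gc_mem_expFracSpan hc j
  exact ⟨expFracSpan_le_span_dpow_gc hc (fc_mul_mem_expFracSpan hc hj),
    expFracSpan_le_span_dpow_gc hc (gc_mul_mem_expFracSpan hc hj)⟩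

end
end

section
/- Let c ∈ ℂ, c ≠ 0. In the Laurent polynomial ring ℂ[x, x^{−1}] set f̃ = c·(x^{−1} + 1), g̃ = −c²·(x^{−2} + x^{−1}), and let D be the derivation c·(x+1)·d/dx. Then for every integer j ≥ 0, the three elements D^j g̃, f̃·D^j g̃ and g̃·D^j g̃ all lie in x^{−1}·ℂ[x^{−1}], the span of the strictly negative powers of x. -/
/-!
The span `x⁻¹ℂ[x⁻¹]` is stable under every linear map sending each `xⁿ`, `n < 0`, into it. This
applies to `(x + 1)·d/dx`, since `(x + 1)·d/dx xⁿ = n (xⁿ + xⁿ⁻¹)`, and to multiplication by `xᵏ`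
for `k ≤ 0`. As `g̃ ∈ x⁻¹ℂ[x⁻¹]` and `f̃`, `g̃` are combinations of nonpositive powers of `x`, all
three claims follow.
-/

noncomputable section

open LaurentPolynomial

/-- The derivative `d/dx` on the Laurent polynomial ring `ℂ[x, x⁻¹]`:
`xⁿ ↦ n·xⁿ⁻¹`. -/
def lpDeriv (p : LaurentPolynomial ℂ) : LaurentPolynomial ℂ :=
  Finsupp.sum (AddMonoidAlgebra.coeff p) fun n a => ((n : ℂ) * a) • T (n - 1)

/-- The ℂ-subspace `x⁻¹·ℂ[x⁻¹]` of `ℂ[x, x⁻¹]` spanned by the strictly negative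
powers of `x`. -/
def negPowers : Submodule ℂ (LaurentPolynomial ℂ) :=
  Submodule.span ℂ (Set.range fun m : ℕ => T (-(m + 1) : ℤ))

lemma T_mem_negPowers {n : ℤ} (hn : n < 0) : (T n : LaurentPolynomial ℂ) ∈ negPowers := by
  obtain ⟨m, rfl⟩ : ∃ m : ℕ, n = -(m + 1) := ⟨(-n - 1).toNat, by omega⟩
  exact Submodule.subset_span ⟨m, rfl⟩

lemma mapsTo_negPowers {f : LaurentPolynomial ℂ →ₗ[ℂ] LaurentPolynomial ℂ}
    (hf : ∀ n < 0, f (T n) ∈ negPowers) :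
    Set.MapsTo f negPowers negPowers := by
  intro p hp
  induction hp using Submodule.span_induction with
  | mem x hx =>
    obtain ⟨m, rfl⟩ := hx
    exact hf _ (by omega)
  | zero => simp
  | add _ _ _ _ hx hy => rw [map_add]; exact add_mem hx hy
  | smul _ _ _ hx => rw [map_smul]; exact Submodule.smul_mem _ _ hx

lemma lpDeriv_T (n : ℤ) : lpDeriv (T n) = (n : ℂ) • T (n - 1) := by
  unfold lpDeriv
  rw [show AddMonoidAlgebra.coeff (T n : LaurentPolynomial ℂ) = Finsupp.single n 1 from rfl,
    Finsupp.sum_single_index (by simp), mul_one]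

lemma lpDeriv_add (p q : LaurentPolynomial ℂ) :
    lpDeriv (p + q) = lpDeriv p + lpDeriv q := by
  unfold lpDeriv
  rw [AddMonoidAlgebra.coeff_add]
  exact Finsupp.sum_add_index' (fun n => by simp) (fun n a b => by rw [mul_add, add_smul])

lemma lpDeriv_smul (r : ℂ) (p : LaurentPolynomial ℂ) :
    lpDeriv (r • p) = r • lpDeriv p := by
  unfold lpDeriv
  rw [AddMonoidAlgebra.coeff_smul, Finsupp.sum_smul_index' (fun n => by simp), Finsupp.smul_sum]
  refine Finsupp.sum_congr fun n _ => ?_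
  rw [smul_eq_mul, smul_smul, mul_left_comm]

def lpDerivₗ : LaurentPolynomial ℂ →ₗ[ℂ] LaurentPolynomial ℂ where
  toFun := lpDeriv
  map_add' := lpDeriv_add
  map_smul' := lpDeriv_smul

lemma T_one_add_one_mul_lpDeriv_T (n : ℤ) :
    (T 1 + 1) * lpDeriv (T n) = (n : ℂ) • (T n + T (n - 1)) := by
  rw [lpDeriv_T, mul_smul_comm, add_mul, one_mul, ← T_add, add_sub_cancel]

lemma mapsTo_T_one_add_one_mul_lpDeriv :
    Set.MapsTo (fun p => (T 1 + 1) * lpDeriv p) negPowers negPowers :=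
  mapsTo_negPowers (f := LinearMap.mulLeft ℂ (T 1 + 1) ∘ₗ lpDerivₗ) fun n hn => by
    change (T 1 + 1) * lpDeriv (T n) ∈ negPowers
    rw [T_one_add_one_mul_lpDeriv_T]
    exact Submodule.smul_mem _ _
      (add_mem (T_mem_negPowers hn) (T_mem_negPowers (by omega)))

lemma T_mul_mem_negPowers {k : ℤ} (hk : k ≤ 0) {p : LaurentPolynomial ℂ}
    (hp : p ∈ negPowers) : T k * p ∈ negPowers :=
  mapsTo_negPowers (f := LinearMap.mulLeft ℂ (T k))
    (fun n hn => by
      change T k * T n ∈ negPowers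
      rw [← T_add]
      exact T_mem_negPowers (by omega)) hp

theorem laurent_poly_span_closure_general (c : ℂ) (j : ℕ) :
    (fun p => c • ((T 1 + 1) * lpDeriv p))^[j] (-(c ^ 2) • (T (-2 : ℤ) + T (-1 : ℤ)))
        ∈ negPowers ∧
      c • (T (-1 : ℤ) + 1) *
          (fun p => c • ((T 1 + 1) * lpDeriv p))^[j] (-(c ^ 2) • (T (-2 : ℤ) + T (-1 : ℤ)))
        ∈ negPowers ∧
      (-(c ^ 2) • (T (-2 : ℤ) + T (-1 : ℤ))) *
          (fun p => c • ((T 1 + 1) * lpDeriv p))^[j] (-(c ^ 2) • (T (-2 : ℤ) + T (-1 : ℤ)))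
        ∈ negPowers := by
  have hD : Set.MapsTo (fun p => c • ((T 1 + 1) * lpDeriv p)) negPowers negPowers :=
    fun p hp => Submodule.smul_mem _ _ (mapsTo_T_one_add_one_mul_lpDeriv hp)
  have hg : -(c ^ 2) • (T (-2 : ℤ) + T (-1 : ℤ)) ∈ negPowers :=
    Submodule.smul_mem _ _
      (add_mem (T_mem_negPowers (by norm_num)) (T_mem_negPowers (by norm_num)))
  have hq := hD.iterate j hg
  refine ⟨hq, ?_, ?_⟩
  · rw [smul_mul_assoc, add_mul, one_mul]
    exact Submodule.smul_mem _ _ (add_mem (T_mul_mem_negPowers (by norm_num) hq) hq)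
  · rw [smul_mul_assoc, add_mul]
    exact Submodule.smul_mem _ _
      (add_mem (T_mul_mem_negPowers (by norm_num) hq) (T_mul_mem_negPowers (by norm_num) hq))

/-- Let `c ≠ 0`, and in `ℂ[x, x⁻¹]` set `f̃ = c·(x⁻¹ + 1)`, `g̃ = −c²·(x⁻² + x⁻¹)`, and
let `D` be the derivation `c·(x+1)·d/dx`.  Then for every `j ≥ 0` the elements `Dʲg̃`,
`f̃·Dʲg̃` and `g̃·Dʲg̃` all lie in `x⁻¹·ℂ[x⁻¹]`. -/
theorem laurent_poly_span_closure (c : ℂ) (hc : c ≠ 0) (j : ℕ) :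
    (fun p => c • ((T 1 + 1) * lpDeriv p))^[j] (-(c ^ 2) • (T (-2 : ℤ) + T (-1 : ℤ)))
        ∈ negPowers ∧
      c • (T (-1 : ℤ) + 1) *
          (fun p => c • ((T 1 + 1) * lpDeriv p))^[j] (-(c ^ 2) • (T (-2 : ℤ) + T (-1 : ℤ)))
        ∈ negPowers ∧
      (-(c ^ 2) • (T (-2 : ℤ) + T (-1 : ℤ))) *
          (fun p => c • ((T 1 + 1) * lpDeriv p))^[j] (-(c ^ 2) • (T (-2 : ℤ) + T (-1 : ℤ)))
        ∈ negPowers :=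
  laurent_poly_span_closure_general c j

end
end

section
/- Let f ∈ ℂ((z)) be a formal Laurent series with f − z^{−1} ∈ ℂ[[z]] (i.e., f ∈ z^{−1} + ℂ[[z]]). Then f satisfies f(−z)·f(z) = ∂_z f(z) if and only if either f(z) = z^{−1}, or there exists c ∈ ℂ, c ≠ 0, such that f(z) = Σ_{n≥0} (−1)^n·B_n·c^n·z^{n−1}/n! (the Laurent expansion of c·e^{cz}/(e^{cz}−1)). -/
noncomputable section

/-!
Write `f = z⁻¹ψ` with `ψ ∈ 1 + z ℂ⟦z⟧`; the equation becomes `z ψ' − ψ = −ψ(−z) ψ(z)`.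
Its coefficient of `zⁿ`, `n ≥ 2`, expresses `(n + (−1)ⁿ) ψₙ` through `ψ₁, …, ψₙ₋₁`, so a
solution is determined by `ψ₁`. The equation is invariant under `ψ(z) ↦ ψ(cz)`, and
`ψ = z eᶻ / (eᶻ − 1) = Σ B'ₙ zⁿ / n!` solves it, with `ψ₁ = 1/2`: differentiate
`(eᶻ − 1) ψ(z) = z eᶻ` and use `(eᶻ − 1) ψ(−z) = z`. So the solutions are the `ψ(cz)`, which
give `f_c` because `(−1)ⁿ Bₙ = B'ₙ`, and `f = z⁻¹` for `c = 0`.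
-/

theorem natCast_add_two_add_neg_one_pow_ne_zero {R : Type*} [Ring R] [CharZero R] (m : ℕ) :
    (m : R) + 2 + (-1) ^ m ≠ 0 := by
  rcases neg_one_pow_eq_or R m with h | h
  · rw [h, show (m : R) + 2 + 1 = ((m + 3 : ℕ) : R) by push_cast; rw [add_assoc]; norm_num]
    exact Nat.cast_ne_zero.2 (by omega)
  · rw [h, show (m : R) + 2 + -1 = ((m + 1 : ℕ) : R) by push_cast; rw [add_assoc]; norm_num]
    exact Nat.cast_ne_zero.2 (by omega)

namespace PowerSeries

section CommRing

variable {R : Type*} [CommRing R]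

theorem X_mul_derivative_rescale (c : R) (ψ : R⟦X⟧) :
    X * d⁄dX R (rescale c ψ) = rescale c (X * d⁄dX R ψ) := by
  ext (_ | n)
  · simp
  · rw [coeff_rescale, coeff_succ_X_mul, coeff_succ_X_mul, coeff_derivative, coeff_derivative,
      coeff_rescale]
    ring

def ReflectedODE (ψ : R⟦X⟧) : Prop :=
  X * d⁄dX R ψ - ψ = -(rescale (-1) ψ * ψ)

theorem ReflectedODE.rescale {ψ : R⟦X⟧} (h : ReflectedODE ψ) (c : R) :
    ReflectedODE (rescale c ψ) := by
  have hcomm : PowerSeries.rescale (-1) (PowerSeries.rescale c ψ) =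
      PowerSeries.rescale c (PowerSeries.rescale (-1) ψ) := by
    rw [rescale_rescale, rescale_rescale, mul_comm]
  rw [ReflectedODE, X_mul_derivative_rescale, hcomm, ← map_mul, ← map_neg, ← map_sub, h]

open Finset in
theorem ReflectedODE.coeff_add_two {ψ : R⟦X⟧} (h : ReflectedODE ψ) (h0 : constantCoeff ψ = 1)
    (m : ℕ) :
    ((m : R) + 2 + (-1) ^ m) * coeff (m + 2) ψ =
      -∑ p ∈ antidiagonal m, (-1) ^ (p.1 + 1) * coeff (p.1 + 1) ψ * coeff (p.2 + 1) ψ := by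
  have hm := congrArg (coeff (m + 2)) h
  rw [map_sub, coeff_succ_X_mul, coeff_derivative, map_neg, coeff_mul,
    Nat.sum_antidiagonal_succ, Nat.sum_antidiagonal_succ'] at hm
  simp only [coeff_rescale, coeff_zero_eq_constantCoeff, h0] at hm
  push_cast at hm
  linear_combination hm

end CommRing

variable {K : Type*} [Field K] [CharZero K]

theorem rescale_neg_one_bernoulli'PowerSeries :
    rescale (-1 : K) (bernoulli'PowerSeries K) = bernoulliPowerSeries K := by
  ext n
  simp only [coeff_rescale, bernoulli'PowerSeries, bernoulliPowerSeries, coeff_mk,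
    bernoulli'_eq_bernoulli]
  push_cast
  rw [← mul_div_assoc, ← mul_assoc, ← mul_pow, neg_one_mul, neg_neg, one_pow, one_mul]

theorem reflectedODE_bernoulli'PowerSeries : ReflectedODE (bernoulli'PowerSeries K) := by
  set B' := bernoulli'PowerSeries K
  have hB' : B' * (exp K - 1) = X * exp K := bernoulli'PowerSeries_mul_exp_sub_one K
  have hB : rescale (-1) B' * (exp K - 1) = X := by
    rw [rescale_neg_one_bernoulli'PowerSeries]; exact bernoulliPowerSeries_mul_exp_sub_one K
  have hdB' : B' * exp K + (exp K - 1) * d⁄dX K B' = X * exp K + exp K := by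
    simpa [derivative_exp] using congrArg (d⁄dX K) hB'
  have hexp : exp K - 1 ≠ (0 : K⟦X⟧) := fun h => by
    simpa using congrArg (coeff 1) h
  apply mul_right_cancel₀ hexp
  linear_combination X * hdB' - (1 + X) * hB' + B' * hB

open Finset in
theorem ReflectedODE.eq_of_coeff_one_eq {ψ χ : K⟦X⟧} (hψ : ReflectedODE ψ)
    (hχ : ReflectedODE χ) (hψ0 : constantCoeff ψ = 1) (hχ0 : constantCoeff χ = 1)
    (h1 : coeff 1 ψ = coeff 1 χ) : ψ = χ := by
  ext n
  induction n using Nat.strong_induction_on with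
  | _ n ih =>
    match n, ih with
    | 0, _ => simp [hψ0, hχ0]
    | 1, _ => exact h1
    | m + 2, ih =>
      apply mul_left_cancel₀ (natCast_add_two_add_neg_one_pow_ne_zero m)
      rw [hψ.coeff_add_two hψ0, hχ.coeff_add_two hχ0]
      refine congrArg _ (sum_congr rfl fun p hp => ?_)
      rw [HasAntidiagonal.mem_antidiagonal] at hp
      rw [ih (p.1 + 1) (by omega), ih (p.2 + 1) (by omega)]

theorem reflectedODE_iff_exists_eq_rescale_bernoulli'PowerSeries {ψ : K⟦X⟧}
    (h0 : constantCoeff ψ = 1) :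
    ReflectedODE ψ ↔ ∃ c : K, ψ = rescale c (bernoulli'PowerSeries K) := by
  refine ⟨fun h => ⟨2 * coeff 1 ψ, ?_⟩, ?_⟩
  · refine h.eq_of_coeff_one_eq (reflectedODE_bernoulli'PowerSeries.rescale _) h0 ?_ ?_
    · simp [← coeff_zero_eq_constantCoeff_apply, coeff_rescale, bernoulli'PowerSeries]
    · simp [coeff_rescale, bernoulli'PowerSeries]
      ring
  · rintro ⟨c, rfl⟩
    exact reflectedODE_bernoulli'PowerSeries.rescale c

end PowerSeries

open HahnSeries PowerSeries

theorem coeff_negSub (f : LaurentSeries ℂ) (n : ℤ) :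
    (negSub f).coeff n = (-1 : ℂ) ^ n * f.coeff n := rfl

theorem coeff_lderiv (f : LaurentSeries ℂ) (n : ℤ) :
    (lderiv f).coeff n = ((n + 1 : ℤ) : ℂ) * f.coeff (n + 1) := rfl

theorem negSub_coe (ψ : ℂ⟦X⟧) : negSub (ψ : LaurentSeries ℂ) = (rescale (-1) ψ : ℂ⟦X⟧) := by
  ext n
  rw [coeff_negSub, coeff_coe, coeff_coe]
  split_ifs with hn
  · rw [mul_zero]
  · rw [coeff_rescale, ← zpow_natCast, Int.natAbs_of_nonneg (not_lt.1 hn)]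

theorem lderiv_coe (ψ : ℂ⟦X⟧) : lderiv (ψ : LaurentSeries ℂ) = (d⁄dX ℂ ψ : ℂ⟦X⟧) := by
  ext n
  rw [coeff_lderiv, coeff_coe, coeff_coe]
  rcases lt_trichotomy n (-1) with hn | rfl | hn
  · rw [if_pos (by omega), if_pos (by omega), mul_zero]
  · simp
  · lift n to ℕ using (by omega)
    rw [if_neg (by omega), if_neg (by omega), coeff_derivative, mul_comm]
    norm_cast

theorem negSub_single_mul (a : ℤ) (r : ℂ) (f : LaurentSeries ℂ) :
    negSub (single a r * f) = single a ((-1) ^ a * r) * negSub f := by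
  ext n
  rw [coeff_negSub, coeff_single_mul, coeff_single_mul, coeff_negSub,
    show (-1 : ℂ) ^ n = (-1) ^ a * (-1) ^ (n - a) by rw [← zpow_add₀ (by norm_num), add_sub_cancel]]
  ring

theorem lderiv_single_mul (a : ℤ) (r : ℂ) (f : LaurentSeries ℂ) :
    lderiv (single a r * f) = single a r * lderiv f + single (a - 1) (a * r) * f := by
  ext n
  rw [coeff_lderiv, HahnSeries.coeff_add, coeff_single_mul, coeff_single_mul, coeff_single_mul,
    coeff_lderiv, show n + 1 - a = n - a + 1 by ring, show n - (a - 1) = n - a + 1 by ring]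
  push_cast
  ring

theorem single_neg_one_mul_coe_X :
    single (-1 : ℤ) (1 : ℂ) * ((X : ℂ⟦X⟧) : LaurentSeries ℂ) = 1 := by
  rw [coe_X, single_mul_single]
  simp

theorem single_add_coe_eq_single_mul_coe (φ : ℂ⟦X⟧) :
    single (-1 : ℤ) (1 : ℂ) + (φ : LaurentSeries ℂ) =
      single (-1 : ℤ) (1 : ℂ) * ((1 + X * φ : ℂ⟦X⟧) : LaurentSeries ℂ) := by
  rw [PowerSeries.coe_add, coe_mul, mul_add, ← mul_assoc, single_neg_one_mul_coe_X, coe_one,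
    one_mul, mul_one]

theorem single_neg_one_mul_coe_inj {ψ χ : ℂ⟦X⟧} :
    single (-1 : ℤ) (1 : ℂ) * (ψ : LaurentSeries ℂ) = single (-1 : ℤ) (1 : ℂ) * χ ↔ ψ = χ := by
  rw [mul_right_inj' (single_ne_zero one_ne_zero), ofPowerSeries_injective.eq_iff]

theorem negSub_mul_self_eq_lderiv_iff (ψ : ℂ⟦X⟧) :
    negSub (single (-1 : ℤ) (1 : ℂ) * ψ) * (single (-1 : ℤ) (1 : ℂ) * ψ) =
        lderiv (single (-1 : ℤ) (1 : ℂ) * ψ) ↔ ReflectedODE ψ := by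
  set u := single (-1 : ℤ) (1 : ℂ)
  have hu : u * u ≠ 0 := mul_ne_zero (single_ne_zero one_ne_zero) (single_ne_zero one_ne_zero)
  have hLHS : negSub (u * ψ) * (u * ψ) =
      u * u * ((-(rescale (-1) ψ * ψ) : ℂ⟦X⟧) : LaurentSeries ℂ) := by
    rw [negSub_single_mul, negSub_coe,
      show single (-1 : ℤ) ((-1 : ℂ) ^ (-1 : ℤ) * 1) = -u by simp [u]]
    push_cast
    ring
  have hRHS : lderiv (u * ψ) = u * u * ((X * d⁄dX ℂ ψ - ψ : ℂ⟦X⟧) : LaurentSeries ℂ) := by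
    rw [lderiv_single_mul, lderiv_coe, show single (-1 - 1 : ℤ) (((-1 : ℤ) : ℂ) * 1) = -(u * u) by
      rw [single_mul_single]; simp]
    push_cast
    linear_combination (-(u * (d⁄dX ℂ ψ : LaurentSeries ℂ))) * single_neg_one_mul_coe_X
  rw [hLHS, hRHS, mul_right_inj' hu, ofPowerSeries_injective.eq_iff, ReflectedODE, eq_comm]

theorem fc_eq (c : ℂ) :
    fc c = single (-1 : ℤ) (1 : ℂ) * (rescale c (bernoulli'PowerSeries ℂ) : ℂ⟦X⟧) := by
  rw [fc]
  congr 3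
  ext n
  simp [coeff_rescale, bernoulli'PowerSeries, bernoulli'_eq_bernoulli]
  ring

theorem fc_zero : fc 0 = single (-1 : ℤ) (1 : ℂ) := by
  rw [fc_eq, rescale_zero_apply]
  simp [bernoulli'PowerSeries]

/-- Let `f ∈ ℂ((z))` with `f − z⁻¹ ∈ ℂ[[z]]`.  Then `f(−z)·f(z) = ∂_z f(z)` if and only
if either `f = z⁻¹` or `f = f_c` for some `c ≠ 0`. -/
theorem ode_solutions (f : LaurentSeries ℂ)
    (hf : ∃ φ : PowerSeries ℂ, f = HahnSeries.single (-1 : ℤ) (1 : ℂ) + (φ : LaurentSeries ℂ)) :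
    negSub f * f = lderiv f ↔
      f = HahnSeries.single (-1 : ℤ) (1 : ℂ) ∨ ∃ c : ℂ, c ≠ 0 ∧ f = fc c := by
  obtain ⟨φ, rfl⟩ := hf
  have hψ0 : constantCoeff (1 + X * φ) = 1 := by simp
  rw [single_add_coe_eq_single_mul_coe, negSub_mul_self_eq_lderiv_iff,
    reflectedODE_iff_exists_eq_rescale_bernoulli'PowerSeries hψ0]
  generalize 1 + X * φ = ψ
  have hfc (c : ℂ) : single (-1 : ℤ) (1 : ℂ) * (ψ : LaurentSeries ℂ) = fc c ↔
      ψ = rescale c (bernoulli'PowerSeries ℂ) := by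
    rw [fc_eq, single_neg_one_mul_coe_inj]
  have hfc0 := hfc 0
  rw [fc_zero] at hfc0
  simp only [hfc0, hfc]
  constructor
  · rintro ⟨c, rfl⟩
    rcases eq_or_ne c 0 with rfl | hc
    exacts [Or.inl rfl, Or.inr ⟨c, hc, rfl⟩]
  · rintro (rfl | ⟨c, -, rfl⟩)
    exacts [⟨0, rfl⟩, ⟨c, rfl⟩]
end
end
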